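/- Online factor-boundary test for LZ77 via LRS: let F_x = T[s..e] be a factor of the LZ77 factorization of a string T = T[1..n], starting at position s and ending at position e. Then for every position i with s < i ≤ n: i ≤ e if and only if i − LRS[i] + 1 ≤ s. -/

import Mathlib

variable {α : Type*}

/-- `occursAt T S p`: the string `S` occurs at the 1-based position `p` in `T`,
i.e. `1 ≤ p ≤ |T| − |S| + 1` and `T[p..p+|S|−1] = S`. -/
def occursAt (T S : List α) (p : ℕ) : Prop :=
  1 ≤ p ∧ p + S.length ≤ T.length + 1 ∧ (T.drop (p - 1)).take S.length = S

/-- `#occ_T(S)`: the number of positions at which `S` occurs in `T`. -/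
noncomputable def occCount (T S : List α) : ℕ :=
  {p : ℕ | occursAt T S p}.ncard

/-- `sub T i ℓ = T[i..i+ℓ−1]` (1-based substring of length `ℓ` starting at `i`). -/
def sub (T : List α) (i ℓ : ℕ) : List α := (T.drop (i - 1)).take ℓ

/-- Longest previous factor array (1-based): `LPF T i` is the largest `ℓ ≥ 0` such that
the prefix `T[i..i+ℓ−1]` of `T[i..n]` also occurs at some position `j < i` in `T`. -/
noncomputable def LPF (T : List α) (i : ℕ) : ℕ :=
  @Nat.findGreatest
    (fun ℓ => (i - 1) + ℓ ≤ T.length ∧ ∃ j, 1 ≤ j ∧ j < i ∧ occursAt T (sub T i ℓ) j)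
    (Classical.decPred _) T.length

/-- Longest repeating suffix array (1-based): `LRS T i` is the length of the longest
suffix of `T[1..i]` occurring at least twice in `T[1..i]`. -/
noncomputable def LRS (T : List α) (i : ℕ) : ℕ :=
  @Nat.findGreatest
    (fun ℓ => 2 ≤ occCount (T.take i) ((T.take i).drop (i - ℓ)))
    (Classical.decPred _) i

/-- `LZfactor T s ℓ`: the substring of length `ℓ` starting at the 1-based position `s`
is a valid LZ77 factor of `T`: either it is a single letter not occurring in
`T[1..s−1]` (i.e. `T[s]` occurs exactly once in `T[1..s]`), or it is the longest
prefix of `T[s..n]` that occurs at least twice in `T[1..s+ℓ−1]`. -/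
def LZfactor (T : List α) (s ℓ : ℕ) : Prop :=
  (ℓ = 1 ∧ occCount (T.take s) (sub T s 1) = 1) ∨
  (2 ≤ occCount (T.take (s + ℓ - 1)) (sub T s ℓ) ∧
    ∀ ℓ', ℓ < ℓ' → s + ℓ' ≤ T.length + 1 →
      occCount (T.take (s + ℓ' - 1)) (sub T s ℓ') < 2)

/-- `IsLZ77 T lens`: `lens` is the list of factor lengths of the LZ77 factorization
`T = F_1 ⋯ F_z`, where factor `F_x` starts at position `s_x = 1 + |F_1| + ⋯ + |F_{x-1}|`. -/
def IsLZ77 (T : List α) (lens : List ℕ) : Prop :=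
  (∀ ℓ ∈ lens, 1 ≤ ℓ) ∧ lens.sum = T.length ∧
  ∀ x, (hx : x < lens.length) → LZfactor T (1 + (lens.take x).sum) lens[x]

/-!
A suffix of `T[1..i]` that repeats in `T[1..i]` has all its suffixes repeating too, so
`m ≤ LRS[i]` exactly when `T[i-m+1..i]` repeats in `T[1..i]`. Taking `m = i - s + 1`, the test
asks whether `T[s..i]` repeats in `T[1..i]`. If `i ≤ e` it does, being a prefix of `F_x`,
which repeats in `T[1..e]`. If `i > e` it cannot: that would contradict the maximality of
`F_x`, or, when `F_x` is a fresh letter, the fact that `T[s]` does not occur before `s`.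
-/

section Occurrences

variable {T S : List α} {p : ℕ}

theorem occursAt_take_iff {a : ℕ} :
    occursAt (T.take a) S p ↔ occursAt T S p ∧ p + S.length ≤ a + 1 := by
  unfold occursAt
  rw [List.length_take, List.drop_take, List.take_take]
  constructor
  · rintro ⟨hp, hfit, hS⟩
    rw [min_eq_left (show S.length ≤ a - (p - 1) by omega)] at hS
    exact ⟨⟨hp, by omega, hS⟩, by omega⟩
  · rintro ⟨⟨hp, hfit, hS⟩, ha⟩
    rw [min_eq_left (show S.length ≤ a - (p - 1) by omega)]
    exact ⟨hp, by omega, hS⟩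

theorem occursAt.take (h : occursAt T S p) (k : ℕ) : occursAt T (S.take k) p := by
  obtain ⟨hp, hfit, hS⟩ := h
  refine ⟨hp, ?_, ?_⟩
  · rw [List.length_take]
    omega
  · rw [List.length_take]
    conv_rhs => rw [← hS, List.take_take]

theorem occursAt.drop (h : occursAt T S p) {k : ℕ} (hk : k ≤ S.length) :
    occursAt T (S.drop k) (p + k) := by
  obtain ⟨hp, hfit, hS⟩ := h
  refine ⟨by omega, ?_, ?_⟩
  · rw [List.length_drop]
    omega
  · rw [List.length_drop, show p + k - 1 = p - 1 + k by omega, ← List.drop_drop]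
    conv_rhs => rw [← hS, List.drop_take]

theorem setOf_occursAt_finite (T S : List α) : {p | occursAt T S p}.Finite :=
  (Set.finite_Iic (T.length + 1)).subset fun _ ⟨_, hfit, _⟩ => by
    simp only [Set.mem_Iic]
    omega

theorem occCount_le_occCount_of_injective {T' S' : List α} (f : ℕ → ℕ) (hf : f.Injective)
    (hocc : ∀ p, occursAt T S p → occursAt T' S' (f p)) : occCount T S ≤ occCount T' S' :=
  Set.ncard_le_ncard_of_injOn f hocc hf.injOn (setOf_occursAt_finite T' S')

theorem occCount_take_le_occCount_take_take {a b k : ℕ} (h : a + k ≤ b + S.length) :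
    occCount (T.take a) S ≤ occCount (T.take b) (S.take k) :=
  occCount_le_occCount_of_injective id Function.injective_id fun p hp => by
    show occursAt _ _ p
    rw [occursAt_take_iff] at hp ⊢
    refine ⟨hp.1.take k, ?_⟩
    rw [List.length_take]
    omega

theorem occCount_le_occCount_drop {k : ℕ} (hk : k ≤ S.length) :
    occCount T S ≤ occCount T (S.drop k) :=
  occCount_le_occCount_of_injective (· + k) (add_left_injective k) fun _ hp => hp.drop hk

end Occurrences

theorem sub_take (T : List α) (s ℓ m : ℕ) : (sub T s ℓ).take m = sub T s (min m ℓ) :=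
  List.take_take

theorem length_sub {T : List α} {s ℓ : ℕ} (hs : 1 ≤ s) (h : s + ℓ ≤ T.length + 1) :
    (sub T s ℓ).length = ℓ := by
  rw [sub, List.length_take, List.length_drop]
  omega

theorem drop_take_eq_sub (T : List α) {i m : ℕ} (h : m ≤ i) :
    (T.take i).drop (i - m) = sub T (i - m + 1) m := by
  rw [List.drop_take, sub, Nat.add_sub_cancel, Nat.sub_sub_self h]

-- `LRS` is built with `Classical.decPred`, which is not defeq to the synthesized `Nat.decLe`
-- instance, so the `Nat.findGreatest` lemmas are applied with the instance given explicitly.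
theorem LRS_le (T : List α) (i : ℕ) : LRS T i ≤ i :=
  @Nat.findGreatest_le _ (Classical.decPred _) i

theorem le_LRS_iff {T : List α} {i m : ℕ} (hm : 0 < m) (hmi : m ≤ i) (hi : i ≤ T.length) :
    m ≤ LRS T i ↔ 2 ≤ occCount (T.take i) ((T.take i).drop (i - m)) := by
  refine ⟨fun hmL => ?_, @Nat.le_findGreatest m
    (fun ℓ => 2 ≤ occCount (T.take i) ((T.take i).drop (i - ℓ))) (Classical.decPred _) i hmi⟩
  have hLi := LRS_le T i
  have hL : 2 ≤ occCount (T.take i) ((T.take i).drop (i - LRS T i)) :=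
    @Nat.findGreatest_of_ne_zero (LRS T i) _ (Classical.decPred _) _ rfl (by omega)
  have hlen : LRS T i - m ≤ ((T.take i).drop (i - LRS T i)).length := by
    rw [List.length_drop, List.length_take]
    omega
  refine hL.trans ((occCount_le_occCount_drop hlen).trans_eq ?_)
  rw [List.drop_drop, show i - LRS T i + (LRS T i - m) = i - m by omega]

theorem occCount_take_sub_le {T : List α} {s ℓ m : ℕ} (hs : 1 ≤ s)
    (hℓ : s + ℓ ≤ T.length + 1) (hmℓ : m ≤ ℓ) :
    occCount (T.take (s + ℓ - 1)) (sub T s ℓ) ≤ occCount (T.take (s + m - 1)) (sub T s m) := by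
  have hprefix : (sub T s ℓ).take m = sub T s m := by rw [sub_take, min_eq_left hmℓ]
  rw [← hprefix]
  apply occCount_take_le_occCount_take_take
  rw [length_sub hs hℓ]
  omega

theorem LZfactor.le_iff_two_le_occCount {T : List α} {s ℓ m : ℕ} (h : LZfactor T s ℓ)
    (hs : 1 ≤ s) (hℓ : s + ℓ ≤ T.length + 1) (hm : 2 ≤ m) (hsm : s + m ≤ T.length + 1) :
    m ≤ ℓ ↔ 2 ≤ occCount (T.take (s + m - 1)) (sub T s m) := by
  constructor
  · intro hmℓ
    rcases h with ⟨rfl, -⟩ | ⟨hocc, -⟩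
    · omega
    · exact hocc.trans (occCount_take_sub_le hs hℓ hmℓ)
  · intro hocc
    by_contra! hℓm
    rcases h with ⟨rfl, hsingle⟩ | ⟨-, hmax⟩
    · have := hocc.trans (occCount_take_sub_le (m := 1) hs hsm (by omega))
      rw [Nat.add_sub_cancel, hsingle] at this
      omega
    · have := hmax m hℓm hsm
      omega

theorem IsLZ77.start_add_length_le {T : List α} {lens : List ℕ} (h : IsLZ77 T lens) {x : ℕ}
    (hx : x < lens.length) : 1 + (lens.take x).sum + lens[x] ≤ T.length + 1 := by
  have := lens.sum_take_add_sum_drop (x + 1)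
  rw [List.sum_take_succ lens x hx, h.2.1] at this
  omega

/-- online factor-boundary test for LZ77 via LRS: if `F_x = T[s..e]` is a
factor of the LZ77 factorization of `T`, then for every position `i` with `s < i ≤ n`:
`i ≤ e` if and only if `i − LRS[i] + 1 ≤ s`. -/
theorem lz77_boundary_test (T : List α) (lens : List ℕ) (h : IsLZ77 T lens)
    (x : ℕ) (hx : x < lens.length) (s e : ℕ)
    (hs : s = 1 + (lens.take x).sum) (he : e = s + lens[x] - 1) :
    ∀ i, s < i → i ≤ T.length → (i ≤ e ↔ i - LRS T i + 1 ≤ s) := by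
  intro i hsi hin
  have hfit := h.start_add_length_le hx
  rw [← hs] at hfit
  have hfac : LZfactor T s lens[x] := hs ▸ h.2.2 x hx
  set m := i - s + 1
  have hms : i - m + 1 = s := by omega
  have hLRS := LRS_le T i
  calc i ≤ e ↔ m ≤ lens[x] := by omega
    _ ↔ 2 ≤ occCount (T.take i) (sub T s m) := by
      rw [hfac.le_iff_two_le_occCount (by omega) hfit (by omega) (by omega),
        show s + m - 1 = i by omega]
    _ ↔ m ≤ LRS T i := by
      rw [le_LRS_iff (by omega) (by omega) hin, drop_take_eq_sub T (by omega), hms]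
    _ ↔ i - LRS T i + 1 ≤ s := by omega
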